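/- arXiv:2008.04307 — 4 statements merged into one kernel-verified Lean document; each statement's English description precedes it below -/
import Mathlib

section
/- Let G be a finite group, S ⊆ G, and σ an anti-automorphism of G. The twisted Cayley graph C(G,S)^σ is undirected if and only if σ²(g)·σ(s⁻¹)·g⁻¹ ∈ S for every s ∈ S and every g ∈ G. -/
/-!
An anti-automorphism `σ` is the same as an isomorphism `G ≃* Gᵐᵒᵖ`, so it preserves inverses.
Write the tail of an edge as `x = (σ g)⁻¹` (possible since `σ` is onto). The equation
`x = σ (σ (x * s) * t)` for a reverse edge is then solved by exactly one `t`, namely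
`σ (σ g) * σ s⁻¹ * g⁻¹` (unique since `σ` is injective), so the reverse edge exists for every
edge iff this element always lies in `S`.
-/

namespace TwistedCayley

variable {G : Type*} [Group G] {σ : G → G}

def toOpHom (hanti : ∀ x y : G, σ (x * y) = σ y * σ x) : G →* Gᵐᵒᵖ :=
  MonoidHom.mk' (fun x => MulOpposite.op (σ x)) fun x y => by
    rw [hanti, MulOpposite.op_mul]

theorem map_inv_of_anti (hanti : ∀ x y : G, σ (x * y) = σ y * σ x) (a : G) :
    σ a⁻¹ = (σ a)⁻¹ :=
  MulOpposite.op_injective (map_inv (toOpHom hanti) a)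

theorem reverse_edge_iff (hinj : Function.Injective σ)
    (hanti : ∀ x y : G, σ (x * y) = σ y * σ x) (g s t : G) :
    (σ g)⁻¹ = σ (σ ((σ g)⁻¹ * s) * t) ↔ t = σ (σ g) * σ s⁻¹ * g⁻¹ := by
  have hsol : (σ g)⁻¹ = σ (σ ((σ g)⁻¹ * s) * (σ (σ g) * σ s⁻¹ * g⁻¹)) := by
    simp only [hanti, map_inv_of_anti hanti]
    group
  exact ⟨fun h => (hinj.comp (mul_right_injective _)) (h.symm.trans hsol), fun h => h ▸ hsol⟩

end TwistedCayley

open TwistedCayley in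
theorem stmt_9_general {G : Type*} [Group G]
    (S : Set G) (σ : G → G)
    (hbij : Function.Bijective σ)
    (hanti : ∀ x y : G, σ (x * y) = σ y * σ x) :
    (∀ x y : G, (∃ s ∈ S, y = σ (x * s)) → ∃ s ∈ S, x = σ (y * s)) ↔
      (∀ s ∈ S, ∀ g : G, σ (σ g) * σ s⁻¹ * g⁻¹ ∈ S) := by
  constructor
  · intro hsymm s hs g
    obtain ⟨t, ht, hrev⟩ := hsymm (σ g)⁻¹ _ ⟨s, hs, rfl⟩
    exact (reverse_edge_iff hbij.injective hanti g s t).mp hrev ▸ ht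
  · rintro hS x _ ⟨s, hs, rfl⟩
    obtain ⟨g, hg⟩ := hbij.surjective x⁻¹
    rw [← inv_inv x, ← hg]
    exact ⟨_, hS s hs g, (reverse_edge_iff hbij.injective hanti g s _).mpr rfl⟩

/-- Let `G` be a finite group, `S ⊆ G`, and `σ` an anti-automorphism of `G`
(a bijection with `σ(xy) = σ(y)σ(x)`). The twisted Cayley graph `C(G,S)^σ` (with an edge from
`x` to `y` whenever `y = σ(xs)` for some `s ∈ S`) is undirected if and only if
`σ²(g)·σ(s⁻¹)·g⁻¹ ∈ S` for every `s ∈ S`, `g ∈ G`. -/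
theorem stmt_9 {G : Type*} [Group G] [Fintype G]
    (S : Set G) (σ : G → G)
    (hbij : Function.Bijective σ)
    (hanti : ∀ x y : G, σ (x * y) = σ y * σ x) :
    (∀ x y : G, (∃ s ∈ S, y = σ (x * s)) → ∃ s ∈ S, x = σ (y * s)) ↔
      (∀ s ∈ S, ∀ g : G, σ (σ g) * σ s⁻¹ * g⁻¹ ∈ S) :=
  stmt_9_general S σ hbij hanti
end

section
/- Let G be a finite group, S ⊆ G, and σ an automorphism of G. Define 𝒩_Σ(A) = {σ(a⁻¹s) : a ∈ A, s ∈ S} for A ⊆ G, and let 𝒩_Σ^m denote its m-fold iterate. Then for every m ≥ 1 and every A ⊆ G, 𝒩_Σ^m(A) = σ²(S⁻¹)·σ⁴(S⁻¹)···σ^{2⌊m/2⌋}(S⁻¹) · σ^m(A^{(−1)^m}) · σ^{2⌈m/2⌉−1}(S)···σ³(S)·σ(S), where for subsets X, Y of G the product XY is {xy : x ∈ X, y ∈ Y}, X⁻¹ = {x⁻¹ : x ∈ X}, A^{(−1)^m} is A if m is even and A⁻¹ if m is odd, and the left factor is empty (the identity) when ⌊m/2⌋ = 0. -/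
/-!
Since `σ` is a homomorphism, `𝒩(A) = σ(A⁻¹ S) = σ(A⁻¹) σ(S)`. Expand `𝒩^(m+1)(A) = 𝒩^m(𝒩(A))`
and substitute `𝒩(A)` for the core set `A` in the formula for `𝒩^m`. For even `m` the core
`σ^m(𝒩(A)) = σ^(m+1)(A⁻¹) σ^(m+1)(S)` contributes a new factor on the right; for odd `m` it is
inverted first, `σ^m(𝒩(A)⁻¹) = σ^(m+1)(S⁻¹) σ^(m+1)(A)`, and the new factor lands on the left.
So the even and odd shapes of the formula alternate, and induction on `⌊m/2⌋` proves both.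
-/

open scoped Pointwise

namespace MonoidHom

variable {G : Type*} [Group G] (f : G →* G)

lemma image_iterate_mul (n : ℕ) (X Y : Set G) :
    (⇑f)^[n] '' (X * Y) = (⇑f)^[n] '' X * (⇑f)^[n] '' Y :=
  Set.image_mul ((show Monoid.End G from f) ^ n)

end MonoidHom

namespace TwistedCayleySum

variable {G : Type*} [Group G] (f : G →* G) (S : Set G)

def nbhd (A : Set G) : Set G := f '' (A⁻¹ * S)

def leftProd (k : ℕ) : Set G :=
  ((List.range k).map fun i => (⇑f)^[2 * (i + 1)] '' S⁻¹).prod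

def rightProd (k : ℕ) : Set G :=
  ((List.range k).map fun i => (⇑f)^[2 * k - 1 - 2 * i] '' S).prod

lemma setOf_eq_nbhd (A : Set G) :
    {y : G | ∃ a ∈ A, ∃ s ∈ S, y = f (a⁻¹ * s)} = nbhd f S A := by
  ext y
  simp only [nbhd, Set.mem_ofPred_eq, Set.mem_image, Set.mem_mul, Set.mem_inv]
  constructor
  · rintro ⟨a, ha, s, hs, rfl⟩
    exact ⟨a⁻¹ * s, ⟨a⁻¹, by rwa [inv_inv], s, hs, rfl⟩, rfl⟩
  · rintro ⟨_, ⟨b, hb, s, hs, rfl⟩, rfl⟩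
    exact ⟨b⁻¹, hb, s, hs, by rw [inv_inv]⟩

lemma leftProd_succ (k : ℕ) :
    leftProd f S (k + 1) = leftProd f S k * (⇑f)^[2 * (k + 1)] '' S⁻¹ :=
  List.prod_range_succ _ k

lemma rightProd_succ (k : ℕ) :
    rightProd f S (k + 1) = (⇑f)^[2 * k + 1] '' S * rightProd f S k := by
  rw [rightProd, List.prod_range_succ', rightProd]
  congr 3
  funext i
  congr 2
  omega

lemma image_iterate_nbhd (n : ℕ) (A : Set G) :
    (⇑f)^[n] '' nbhd f S A = (⇑f)^[n + 1] '' A⁻¹ * (⇑f)^[n + 1] '' S := by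
  rw [nbhd, ← Set.image_comp, ← Function.iterate_succ, f.image_iterate_mul]

lemma image_iterate_inv_nbhd (n : ℕ) (A : Set G) :
    (⇑f)^[n] '' (nbhd f S A)⁻¹ = (⇑f)^[n + 1] '' S⁻¹ * (⇑f)^[n + 1] '' A := by
  rw [nbhd, ← Set.image_inv f, mul_inv_rev, inv_inv, ← Set.image_comp, ← Function.iterate_succ,
    f.image_iterate_mul]

lemma iterate_nbhd_odd_of_even (k : ℕ)
    (h : ∀ A, (nbhd f S)^[2 * k] A = leftProd f S k * (⇑f)^[2 * k] '' A * rightProd f S k)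
    (A : Set G) :
    (nbhd f S)^[2 * k + 1] A =
      leftProd f S k * (⇑f)^[2 * k + 1] '' A⁻¹ * rightProd f S (k + 1) := by
  rw [Function.iterate_succ_apply, h, image_iterate_nbhd, rightProd_succ]
  simp only [mul_assoc]

lemma iterate_nbhd_even (k : ℕ) (A : Set G) :
    (nbhd f S)^[2 * k] A = leftProd f S k * (⇑f)^[2 * k] '' A * rightProd f S k := by
  induction k generalizing A with
  | zero => simp [leftProd, rightProd]
  | succ k ih =>
    have h2 : 2 * (k + 1) = 2 * k + 1 + 1 := by ring
    rw [h2, Function.iterate_succ_apply, iterate_nbhd_odd_of_even f S k ih,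
      image_iterate_inv_nbhd, ← h2, leftProd_succ]
    simp only [mul_assoc]

lemma iterate_nbhd_odd (k : ℕ) (A : Set G) :
    (nbhd f S)^[2 * k + 1] A =
      leftProd f S k * (⇑f)^[2 * k + 1] '' A⁻¹ * rightProd f S (k + 1) :=
  iterate_nbhd_odd_of_even f S k (iterate_nbhd_even f S k) A

end TwistedCayleySum

theorem stmt_17_general {G : Type*} [Group G]
    (S : Set G) (σ : G ≃* G)
    (NSig : Set G → Set G)
    (hNSig : ∀ A : Set G, NSig A = {y : G | ∃ a ∈ A, ∃ s ∈ S, y = σ (a⁻¹ * s)})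
    (m : ℕ) (A : Set G) :
    NSig^[m] A =
      ((List.range (m / 2)).map (fun i => (⇑σ)^[2 * (i + 1)] '' S⁻¹)).prod *
      ((⇑σ)^[m] '' (if Even m then A else A⁻¹)) *
      ((List.range ((m + 1) / 2)).map
        (fun i => (⇑σ)^[2 * ((m + 1) / 2) - 1 - 2 * i] '' S)).prod := by
  obtain rfl : NSig = TwistedCayleySum.nbhd (σ : G →* G) S :=
    funext fun A => (hNSig A).trans (TwistedCayleySum.setOf_eq_nbhd (σ : G →* G) S A)
  obtain ⟨k, rfl | rfl⟩ := Nat.even_or_odd' m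
  · rw [if_pos (even_two_mul k), show 2 * k / 2 = k by omega, show (2 * k + 1) / 2 = k by omega]
    exact TwistedCayleySum.iterate_nbhd_even _ S k A
  · rw [if_neg (Nat.not_even_two_mul_add_one k), show (2 * k + 1) / 2 = k by omega,
      show (2 * k + 1 + 1) / 2 = k + 1 by omega]
    exact TwistedCayleySum.iterate_nbhd_odd _ S k A

/-- Let `G` be a finite group, `S ⊆ G`, and `σ` an automorphism of `G`. With
`𝒩_Σ(A) = {σ(a⁻¹s) : a ∈ A, s ∈ S}` the out-neighbourhood operation of the twisted Cayley sum
graph and `𝒩_Σ^m` its `m`-fold iterate, for every `m ≥ 1` and every `A ⊆ G`,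
`𝒩_Σ^m(A) = σ²(S⁻¹)·σ⁴(S⁻¹)···σ^(2⌊m/2⌋)(S⁻¹) · σ^m(A^((-1)^m)) ·
σ^(2⌈m/2⌉-1)(S)···σ³(S)·σ(S)`, where products of sets are pointwise products (the left factor
being the identity `{1}` of the set monoid when `⌊m/2⌋ = 0`), `X⁻¹ = {x⁻¹ : x ∈ X}` and
`A^((-1)^m)` is `A` if `m` is even and `A⁻¹` if `m` is odd. -/
theorem stmt_17 {G : Type*} [Group G] [Fintype G]
    (S : Set G) (σ : G ≃* G)
    (NSig : Set G → Set G)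
    (hNSig : ∀ A : Set G, NSig A = {y : G | ∃ a ∈ A, ∃ s ∈ S, y = σ (a⁻¹ * s)})
    (m : ℕ) (hm : 1 ≤ m) (A : Set G) :
    NSig^[m] A =
      ((List.range (m / 2)).map (fun i => (⇑σ)^[2 * (i + 1)] '' S⁻¹)).prod *
      ((⇑σ)^[m] '' (if Even m then A else A⁻¹)) *
      ((List.range ((m + 1) / 2)).map
        (fun i => (⇑σ)^[2 * ((m + 1) / 2) - 1 - 2 * i] '' S)).prod :=
  stmt_17_general S σ NSig hNSig m A
end

section
/- Let G be a finite group, σ an anti-automorphism of G, and S ⊆ G such that σ²(g)·σ(s⁻¹)·g⁻¹ ∈ S for every s ∈ S and g ∈ G (equivalently, the twisted Cayley graph C(G,S)^σ is undirected). Define 𝒩(A) = {σ(as) : a ∈ A, s ∈ S} for A ⊆ G. Then for every A ⊆ G and every g ∈ G, 𝒩(𝒩(gA)) = g·𝒩(𝒩(A)), where gA = {ga : a ∈ A}. -/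
/-!
Left translation by `g` does not commute with the one-step neighbourhood map `𝒩`, but it does
after two steps: a two-step neighbour of `ga` has the form `σ(t)·σ²(g)·σ²(a)·σ²(s)`, and the
twisted symmetry of `S` supplies `t' ∈ S` with `σ(t') = g⁻¹·σ(t)·σ²(g)`, which moves `g` to
the front. Finding `t'` needs the map `s ↦ σ²(g)·σ(s⁻¹)·g⁻¹`, which sends `S` into `S`, to be
onto `S`; being injective on the finite set `S`, it is.
-/

section AntiHom

variable {G : Type*} [Group G] {σ : G → G}

theorem antiHom_one (hanti : ∀ x y : G, σ (x * y) = σ y * σ x) : σ 1 = 1 := by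
  have h := hanti 1 1
  rw [one_mul] at h
  exact right_eq_mul.mp h

theorem antiHom_inv (hanti : ∀ x y : G, σ (x * y) = σ y * σ x) (x : G) :
    σ x⁻¹ = (σ x)⁻¹ :=
  eq_inv_of_mul_eq_one_left (by rw [← hanti, mul_inv_cancel, antiHom_one hanti])

end AntiHom

section TwistedCayley

variable {G : Type*} [Group G] {σ : G → G} {S : Set G}

def twistedNbhd (σ : G → G) (S A : Set G) : Set G :=
  {y | ∃ a ∈ A, ∃ s ∈ S, y = σ (a * s)}

theorem surjOn_twistedSymm (hS_fin : S.Finite) (hinj : Function.Injective σ)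
    (hS : ∀ s ∈ S, ∀ g : G, σ (σ g) * σ s⁻¹ * g⁻¹ ∈ S) (g : G) :
    Set.SurjOn (fun s => σ (σ g) * σ s⁻¹ * g⁻¹) S S := by
  have hmaps : Set.MapsTo (fun s => σ (σ g) * σ s⁻¹ * g⁻¹) S S := fun s hs => hS s hs g
  have hinjOn : Set.InjOn (fun s => σ (σ g) * σ s⁻¹ * g⁻¹) S := fun a _ b _ hab =>
    inv_injective (hinj (mul_left_cancel (mul_right_cancel hab)))
  exact ((hS_fin.injOn_iff_bijOn_of_mapsTo hmaps).mp hinjOn).surjOn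

theorem exists_mem_antiHom_eq_conj (hS_fin : S.Finite) (hinj : Function.Injective σ)
    (hanti : ∀ x y : G, σ (x * y) = σ y * σ x)
    (hS : ∀ s ∈ S, ∀ g : G, σ (σ g) * σ s⁻¹ * g⁻¹ ∈ S) {t : G} (ht : t ∈ S) (g : G) :
    ∃ s ∈ S, σ s = g⁻¹ * σ t * σ (σ g) := by
  have ht_inv : (σ t)⁻¹ ∈ S := by
    simpa [antiHom_one hanti, antiHom_inv hanti] using hS t ht 1
  obtain ⟨s, hs, hfs⟩ := surjOn_twistedSymm hS_fin hinj hS g ht_inv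
  refine ⟨s, hs, ?_⟩
  simp only [antiHom_inv hanti] at hfs
  rw [← inv_inv (σ s), ← inv_inv (σ t), ← hfs]
  group

theorem twistedNbhd_twistedNbhd_image_mul_subset (hS_fin : S.Finite)
    (hinj : Function.Injective σ) (hanti : ∀ x y : G, σ (x * y) = σ y * σ x)
    (hS : ∀ s ∈ S, ∀ g : G, σ (σ g) * σ s⁻¹ * g⁻¹ ∈ S) (A : Set G) (g : G) :
    twistedNbhd σ S (twistedNbhd σ S ((g * ·) '' A)) ⊆
      (g * ·) '' twistedNbhd σ S (twistedNbhd σ S A) := by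
  rintro _ ⟨_, ⟨a, ⟨a, ha, rfl⟩, s, hs, rfl⟩, t, ht, rfl⟩
  obtain ⟨t', ht', hσt'⟩ := exists_mem_antiHom_eq_conj hS_fin hinj hanti hS ht g
  refine ⟨σ (σ (a * s) * t'), ⟨σ (a * s), ⟨a, ha, s, hs, rfl⟩, t', ht', rfl⟩, ?_⟩
  simp only [hanti, hσt']
  group

theorem twistedNbhd_twistedNbhd_image_mul (hS_fin : S.Finite)
    (hinj : Function.Injective σ) (hanti : ∀ x y : G, σ (x * y) = σ y * σ x)
    (hS : ∀ s ∈ S, ∀ g : G, σ (σ g) * σ s⁻¹ * g⁻¹ ∈ S) (A : Set G) (g : G) :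
    twistedNbhd σ S (twistedNbhd σ S ((g * ·) '' A)) =
      (g * ·) '' twistedNbhd σ S (twistedNbhd σ S A) := by
  have hsub := twistedNbhd_twistedNbhd_image_mul_subset hS_fin hinj hanti hS
  refine (hsub A g).antisymm ?_
  calc (g * ·) '' twistedNbhd σ S (twistedNbhd σ S A)
      = (g * ·) '' twistedNbhd σ S (twistedNbhd σ S ((g⁻¹ * ·) '' ((g * ·) '' A))) := by
        rw [Set.image_image]; simp only [inv_mul_cancel_left, Set.image_id']
    _ ⊆ (g * ·) '' ((g⁻¹ * ·) '' twistedNbhd σ S (twistedNbhd σ S ((g * ·) '' A))) :=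
        Set.image_mono (hsub _ g⁻¹)
    _ = twistedNbhd σ S (twistedNbhd σ S ((g * ·) '' A)) := by
        rw [Set.image_image]; simp only [mul_inv_cancel_left, Set.image_id']

end TwistedCayley

/-- Let `G` be a finite group, `σ` an anti-automorphism of `G` (a bijection with
`σ(xy) = σ(y)σ(x)`), and `S ⊆ G` such that `σ²(g)·σ(s⁻¹)·g⁻¹ ∈ S` for every `s ∈ S`, `g ∈ G`
(equivalently, the twisted Cayley graph `C(G,S)^σ` is undirected). With
`𝒩(A) = {σ(as) : a ∈ A, s ∈ S}`, for every `A ⊆ G` and `g ∈ G`,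
`𝒩(𝒩(gA)) = g·𝒩(𝒩(A))`. -/
theorem stmt_18 {G : Type*} [Group G] [Fintype G]
    (σ : G → G)
    (hbij : Function.Bijective σ)
    (hanti : ∀ x y : G, σ (x * y) = σ y * σ x)
    (S : Set G)
    (hS : ∀ s ∈ S, ∀ g : G, σ (σ g) * σ s⁻¹ * g⁻¹ ∈ S)
    (N : Set G → Set G)
    (hN : ∀ A : Set G, N A = {y : G | ∃ a ∈ A, ∃ s ∈ S, y = σ (a * s)})
    (A : Set G) (g : G) :
    N (N ((g * ·) '' A)) = (g * ·) '' N (N A) := by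
  obtain rfl : N = twistedNbhd σ S := funext hN
  exact twistedNbhd_twistedNbhd_image_mul (Set.toFinite S) hbij.injective hanti hS A g
end

section
/- Let G be a finite group, σ an automorphism of G, and S ⊆ G such that σ²(g)·σ(s)·g⁻¹ ∈ S for every s ∈ S and g ∈ G (equivalently, the twisted Cayley sum graph C_Σ(G,S)^σ is undirected). Define 𝒩_Σ(A) = {σ(a⁻¹s) : a ∈ A, s ∈ S} for A ⊆ G, and let 𝒩_Σ^m denote its m-fold iterate. Then for every m ≥ 1, every A ⊆ G and every g ∈ G, 𝒩_Σ^m(𝒩_Σ^m(Ag⁻¹)) = 𝒩_Σ^m(𝒩_Σ^m(A))·g⁻¹, where Ag⁻¹ = {ag⁻¹ : a ∈ A}. -/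
/-- Let `G` be a finite group, `σ` an automorphism of `G`, and `S ⊆ G` such that
`σ²(g)·σ(s)·g⁻¹ ∈ S` for every `s ∈ S`, `g ∈ G` (equivalently, the twisted Cayley sum graph
`C_Σ(G,S)^σ` is undirected). With `𝒩_Σ(A) = {σ(a⁻¹s) : a ∈ A, s ∈ S}` and `𝒩_Σ^m` its
`m`-fold iterate, for every `m ≥ 1`, `A ⊆ G` and `g ∈ G`,
`𝒩_Σ^m(𝒩_Σ^m(Ag⁻¹)) = 𝒩_Σ^m(𝒩_Σ^m(A))·g⁻¹`. -/
theorem stmt_19 {G : Type*} [Group G] [Fintype G]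
    (σ : G ≃* G) (S : Set G)
    (hS : ∀ s ∈ S, ∀ g : G, σ (σ g) * σ s * g⁻¹ ∈ S)
    (NSig : Set G → Set G)
    (hNSig : ∀ A : Set G, NSig A = {y : G | ∃ a ∈ A, ∃ s ∈ S, y = σ (a⁻¹ * s)})
    (m : ℕ) (hm : 1 ≤ m) (A : Set G) (g : G) :
    NSig^[m] (NSig^[m] ((· * g⁻¹) '' A)) = (· * g⁻¹) '' (NSig^[m] (NSig^[m] A)) := by
  -- σ maps S into S
  have hσS : ∀ s ∈ S, σ s ∈ S := fun s hs => by simpa using hS s hs 1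
  -- hence, by finiteness, σ '' S = S and σ.symm maps S into S
  have himg : σ '' S = S := by
    apply Set.eq_of_subset_of_ncard_le
    · rintro _ ⟨s, hs, rfl⟩; exact hσS s hs
    · rw [Set.ncard_image_of_injective _ σ.injective]
    · exact Set.toFinite S
  have hσS' : ∀ s ∈ S, σ.symm s ∈ S := by
    intro s hs
    rw [← himg] at hs
    obtain ⟨t, ht, rfl⟩ := hs
    simpa using ht
  have h1 : ∀ (g : G) (B : Set G), NSig ((· * g⁻¹) '' B) = (σ g * ·) '' NSig B := by
    intro g B
    rw [hNSig, hNSig]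
    ext y
    constructor
    · rintro ⟨a, ⟨b, hb, rfl⟩, s, hs, rfl⟩
      refine ⟨σ (b⁻¹ * s), ⟨b, hb, s, hs, rfl⟩, ?_⟩
      simp [mul_inv_rev, map_mul, mul_assoc]
    · rintro ⟨_, ⟨b, hb, s, hs, rfl⟩, rfl⟩
      refine ⟨b * g⁻¹, ⟨b, hb, rfl⟩, s, hs, ?_⟩
      simp [mul_inv_rev, map_mul, mul_assoc]
  have h2 : ∀ (g : G) (B : Set G), NSig ((σ g * ·) '' B) = (· * g⁻¹) '' NSig B := by
    intro g B
    rw [hNSig, hNSig]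
    ext y
    constructor
    · rintro ⟨a, ⟨b, hb, rfl⟩, s, hs, rfl⟩
      refine ⟨σ (b⁻¹ * (σ g⁻¹ * s * σ.symm g)),
        ⟨b, hb, σ g⁻¹ * s * σ.symm g, ?_, rfl⟩, ?_⟩
      · have := hS (σ.symm s) (hσS' s hs) (σ.symm g⁻¹)
        simpa [map_inv] using this
      · simp only [mul_inv_rev, map_mul, map_inv, MulEquiv.apply_symm_apply]
        group
    · rintro ⟨_, ⟨b, hb, s, hs, rfl⟩, rfl⟩
      refine ⟨σ g * b, ⟨b, hb, rfl⟩, σ g * s * (σ.symm g)⁻¹, ?_, ?_⟩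
      · have := hS (σ.symm s) (hσS' s hs) (σ.symm g)
        simpa using this
      · simp only [mul_inv_rev, map_mul, map_inv, MulEquiv.apply_symm_apply]
        group
  have key : ∀ (B : Set G), NSig (NSig ((· * g⁻¹) '' B)) = (· * g⁻¹) '' NSig (NSig B) := by
    intro B
    rw [h1, h2]
  have even : ∀ (n : ℕ) (B : Set G),
      NSig^[2 * n] ((· * g⁻¹) '' B) = (· * g⁻¹) '' NSig^[2 * n] B := by
    intro n
    induction n with
    | zero => intro B; simp
    | succ k ih =>
      intro B
      have e : 2 * (k + 1) = 2 + 2 * k := by ring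
      rw [e, Function.iterate_add_apply, Function.iterate_add_apply, ih B]
      simp only [Function.iterate_succ, Function.iterate_zero, Function.comp_def, id]
      rw [key]
  have := even m A
  rw [two_mul, Function.iterate_add_apply, Function.iterate_add_apply] at this
  exact this
end
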